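/- Let F = A^{1/m} be an m-th root Finsler metric on an open subset U ⊆ ℝⁿ such that for every x ∈ U the polynomial y ↦ A(x,y) is irreducible in ℝ[y¹,…,yⁿ]. If F has isotropic S-curvature, i.e. S(x,y) = (n+1)c(x)F(x,y) for some smooth scalar function c on U, then S ≡ 0. -/

import Mathlib

open scoped BigOperators
open Matrix

noncomputable section

/-- Partial derivative of `f` in the `i`-th coordinate direction at `v`. -/
def pd {n : ℕ} (f : (Fin n → ℝ) → ℝ) (i : Fin n) (v : Fin n → ℝ) : ℝ :=
  fderiv ℝ f v (Pi.single i 1)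

/-- `A(x,y) = a_{i₁⋯i_m}(x) y^{i₁}⋯y^{i_m}`. -/
def Amap {n m : ℕ} (a : (Fin m → Fin n) → (Fin n → ℝ) → ℝ) (x y : Fin n → ℝ) : ℝ :=
  ∑ ι : Fin m → Fin n, a ι x * ∏ k, y (ι k)

/-- Fundamental tensor `g_{ij} = ½ ∂²(F²)/∂y^i∂y^j`. -/
def gmat {n : ℕ} (F : (Fin n → ℝ) → (Fin n → ℝ) → ℝ) (x y : Fin n → ℝ) :
    Matrix (Fin n) (Fin n) ℝ :=
  Matrix.of fun i j => (1/2) * pd (fun v => pd (fun w => (F x w)^2) j v) i y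

/-- Spray coefficients `G^i = ¼ g^{il}[∂²(F²)/∂x^k∂y^l · y^k − ∂(F²)/∂x^l]`. -/
def sprayCoef {n : ℕ} (F : (Fin n → ℝ) → (Fin n → ℝ) → ℝ) (i : Fin n)
    (x y : Fin n → ℝ) : ℝ :=
  (1/4) * ∑ l, (gmat F x y)⁻¹ i l *
    ((∑ k, pd (fun x' => pd (fun w => (F x' w)^2) l y) k x * y k)
      - pd (fun x' => (F x' y)^2) l x)

/-- S-curvature `S = ∂G^i/∂y^i − y^i ∂/∂x^i [ln √(det g)]`. -/
def Scurv {n : ℕ} (F : (Fin n → ℝ) → (Fin n → ℝ) → ℝ) (x y : Fin n → ℝ) : ℝ :=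
  (∑ i, pd (fun v => sprayCoef F i x v) i y)
    - ∑ i, y i * pd (fun x' => Real.log (Real.sqrt ((gmat F x' y).det))) i x

/-!
Since `A(x, -y) = (-1)^m A(x, y)` and `A > 0` off the origin, `m` is even and the metric is
reversible: `F(x, ·)` is even. Differentiation in `y` flips parity in `y` and differentiation
in `x` preserves it, so `g_{ij}(x, ·)` and `G^i(x, ·)` are even and `S(x, ·)` is odd. An odd
function equal to `(n + 1) c F` with `F` even must vanish.
-/

section Parity

variable {n : ℕ}

lemma pd_neg (f : (Fin n → ℝ) → ℝ) (i : Fin n) (y : Fin n → ℝ) :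
    pd (fun v => -f v) i y = -pd f i y := by
  simp [pd, fderiv_fun_neg]

lemma pd_comp_neg (f : (Fin n → ℝ) → ℝ) (i : Fin n) (y : Fin n → ℝ) :
    pd (fun w => f (-w)) i y = -pd f i (-y) := by
  change fderiv ℝ (f ∘ ContinuousLinearEquiv.neg ℝ) y _ = _
  rw [ContinuousLinearEquiv.comp_right_fderiv]
  simp [pd]

lemma pd_odd_of_even {f : (Fin n → ℝ) → ℝ} (hf : f.Even) (i : Fin n) : (pd f i).Odd := by
  intro y
  have h := pd_comp_neg f i y
  rw [funext hf] at h
  linarith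

lemma pd_even_of_odd {f : (Fin n → ℝ) → ℝ} (hf : f.Odd) (i : Fin n) : (pd f i).Even := by
  intro y
  have h := pd_comp_neg f i y
  rw [funext hf, pd_neg] at h
  linarith

end Parity

section Amap

variable {n m : ℕ} (a : (Fin m → Fin n) → (Fin n → ℝ) → ℝ)

lemma Amap_neg (x y : Fin n → ℝ) : Amap a x (-y) = (-1) ^ m * Amap a x y := by
  simp only [Amap, Finset.mul_sum, Pi.neg_apply, Finset.prod_neg, Finset.card_univ,
    Fintype.card_fin]
  exact Finset.sum_congr rfl fun _ _ => by ring

lemma Amap_even (hm : Even m) (x : Fin n → ℝ) : (Amap a x).Even := by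
  intro y
  rw [Amap_neg, hm.neg_one_pow, one_mul]

lemma even_of_Amap_pos {x y : Fin n → ℝ} (hpos : 0 < Amap a x y) (hpos' : 0 < Amap a x (-y)) :
    Even m := by
  by_contra hm
  rw [Amap_neg, (Nat.not_even_iff_odd.mp hm).neg_one_pow] at hpos'
  linarith

end Amap

section Reversible

variable {n : ℕ} {F : (Fin n → ℝ) → (Fin n → ℝ) → ℝ} (hF : ∀ x, (F x).Even)
include hF

lemma gmat_even (x : Fin n → ℝ) : (gmat F x).Even := by
  intro y
  ext i j
  simp only [gmat, Matrix.of_apply]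
  congr 1
  refine pd_even_of_odd (fun v => ?_) i y
  exact pd_odd_of_even (fun w => by rw [hF x w]) j v

lemma sprayCoef_even (i : Fin n) (x : Fin n → ℝ) : (sprayCoef F i x).Even := by
  intro y
  have hpd : ∀ l, (fun x' => pd (fun w => F x' w ^ 2) l (-y))
      = fun x' => -pd (fun w => F x' w ^ 2) l y :=
    fun l => funext fun x' => pd_odd_of_even (fun w => by rw [hF x' w]) l y
  simp [sprayCoef, gmat_even hF x y, hpd, pd_neg, hF _ y]

lemma Scurv_odd (x : Fin n → ℝ) : (Scurv F x).Odd := by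
  intro y
  have hg : ∀ x', gmat F x' (-y) = gmat F x' y := fun x' => gmat_even hF x' y
  simp only [Scurv, hg, fun i => pd_odd_of_even (sprayCoef_even hF i x) i y, Pi.neg_apply,
    neg_mul, Finset.sum_neg_distrib]
  ring

end Reversible

theorem mth_root_isotropic_S_curvature_general
    (n m : ℕ)
    (U : Set (Fin n → ℝ))
    (a : (Fin m → Fin n) → (Fin n → ℝ) → ℝ)
    (hApos : ∀ x ∈ U, ∀ y : Fin n → ℝ, y ≠ 0 → 0 < Amap a x y)
    (F : (Fin n → ℝ) → (Fin n → ℝ) → ℝ)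
    (hF : ∀ x y, F x y = (Amap a x y) ^ ((1:ℝ)/m))
    (c : (Fin n → ℝ) → ℝ)
    (hS : ∀ x ∈ U, ∀ y : Fin n → ℝ, y ≠ 0 →
      Scurv F x y = (n + 1 : ℝ) * c x * F x y) :
    ∀ x ∈ U, ∀ y : Fin n → ℝ, y ≠ 0 → Scurv F x y = 0 := by
  intro x hx y hy
  have hy' : -y ≠ 0 := neg_ne_zero.mpr hy
  have hm : Even m := even_of_Amap_pos a (hApos x hx y hy) (hApos x hx (-y) hy')
  have hFeven : ∀ x, (F x).Even := fun x y => by rw [hF, hF, Amap_even a hm x y]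
  have hS' := hS x hx (-y) hy'
  rw [Scurv_odd hFeven x y, hFeven x y] at hS'
  linarith [hS x hx y hy]

/-- an m-th root metric with isotropic S-curvature `S = (n+1)cF`
has vanishing S-curvature. -/
theorem mth_root_isotropic_S_curvature
    (n m : ℕ) (hn : 2 ≤ n) (hm : 3 ≤ m)
    (U : Set (Fin n → ℝ)) (hU : IsOpen U)
    (a : (Fin m → Fin n) → (Fin n → ℝ) → ℝ)
    (ha_smooth : ∀ ι, ContDiff ℝ (⊤:ℕ∞) (a ι))
    (ha_symm : ∀ (σ : Equiv.Perm (Fin m)) (ι : Fin m → Fin n) (x : Fin n → ℝ),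
      a (ι ∘ σ) x = a ι x)
    (hApos : ∀ x ∈ U, ∀ y : Fin n → ℝ, y ≠ 0 → 0 < Amap a x y)
    (F : (Fin n → ℝ) → (Fin n → ℝ) → ℝ)
    (hF : ∀ x y, F x y = (Amap a x y) ^ ((1:ℝ)/m))
    (hgpd : ∀ x ∈ U, ∀ y : Fin n → ℝ, y ≠ 0 → (gmat F x y).PosDef)
    (hirr : ∀ x ∈ U, ∃ P : MvPolynomial (Fin n) ℝ, Irreducible P ∧
      ∀ y : Fin n → ℝ, MvPolynomial.eval y P = Amap a x y)
    (c : (Fin n → ℝ) → ℝ) (hc : ContDiffOn ℝ (⊤:ℕ∞) c U)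
    (hS : ∀ x ∈ U, ∀ y : Fin n → ℝ, y ≠ 0 →
      Scurv F x y = (n + 1 : ℝ) * c x * F x y) :
    ∀ x ∈ U, ∀ y : Fin n → ℝ, y ≠ 0 → Scurv F x y = 0 :=
  mth_root_isotropic_S_curvature_general n m U a hApos F hF c hS
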